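/- arXiv:1901.03940 — 2 statements merged into one kernel-verified Lean document; each statement's English description precedes it below -/
import Mathlib

section
/- Let ρ_t ∈ ℂ^N with ‖ρ_t‖ = 1 and let ρ ∈ ℂ^N satisfy dist(ρ, ρ_t) ≤ ε with ε < 1. Then ‖ρρ^H - ρ_t ρ_t^H‖_F ≥ √((1-ε)(2-ε))·dist(ρ, ρ_t). -/
open ComplexConjugate

/-- Outer product `x yᴴ`. -/
noncomputable def outer {N : ℕ} (x y : EuclideanSpace ℂ (Fin N)) :
    Matrix (Fin N) (Fin N) ℂ := Matrix.of fun i j => x i * conj (y j)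

/-- The Frobenius norm. -/
noncomputable def frobNorm {N : ℕ} (A : Matrix (Fin N) (Fin N) ℂ) : ℝ :=
  Real.sqrt (∑ i, ∑ j, Complex.normSq (A i j))

/-- Phase-invariant distance `dist(ρ, ρ_t) = min_φ ‖ρ - e^{iφ} ρ_t‖`. -/
noncomputable def pdist {N : ℕ} (x y : EuclideanSpace ℂ (Fin N)) : ℝ :=
  sInf {r : ℝ | ∃ φ : ℝ, r = ‖x - Complex.exp (φ * Complex.I) • y‖}

/-! With `b = ‖ρ‖` and `d = dist(ρ, ρ_t)`, both `d²` and the squared Frobenius norm are explicit in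
`|⟪ρ, ρ_t⟫|`; eliminating it gives `‖ρρᴴ - ρ_tρ_tᴴ‖_F² = (b² - 1)²/2 + d²(b² + 1 - d²/2)`.
Since `|b - 1| ≤ d ≤ ε`, we have `b² ≥ (1 - ε)²`, so the coefficient of `d²` is at least
`(1 - ε)(2 - ε)`. -/

open scoped InnerProductSpace

section InnerProductSpace

variable {E : Type*} [NormedAddCommGroup E] [InnerProductSpace ℂ E]

theorem norm_sub_exp_smul_sq (x y : E) (φ : ℝ) :
    ‖x - Complex.exp (φ * Complex.I) • y‖ ^ 2 =
      ‖x‖ ^ 2 + ‖y‖ ^ 2 - 2 * (Complex.exp (φ * Complex.I) * ⟪x, y⟫_ℂ).re := by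
  rw [norm_sub_sq (𝕜 := ℂ), inner_smul_right, norm_smul, Complex.norm_exp_ofReal_mul_I,
    RCLike.re_to_complex]
  ring

theorem sq_norm_sub_norm_le (x y : E) :
    (‖x‖ - ‖y‖) ^ 2 ≤ ‖x‖ ^ 2 + ‖y‖ ^ 2 - 2 * ‖⟪x, y⟫_ℂ‖ := by
  nlinarith [norm_inner_le_norm (𝕜 := ℂ) x y]

end InnerProductSpace

section EuclideanSpace

variable {N : ℕ} (x y : EuclideanSpace ℂ (Fin N))

theorem pdist_eq_sqrt : pdist x y = √(‖x‖ ^ 2 + ‖y‖ ^ 2 - 2 * ‖⟪x, y⟫_ℂ‖) := by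
  set w := ⟪x, y⟫_ℂ
  refine IsLeast.csInf_eq ⟨⟨-w.arg, ?_⟩, ?_⟩
  · -- the phase `e^{-i arg w}` rotates `⟪x, y⟫` onto the positive real axis
    have hrot : Complex.exp (↑(-w.arg) * Complex.I) * w = ‖w‖ := by
      calc Complex.exp (↑(-w.arg) * Complex.I) * w
          = Complex.exp (↑(-w.arg) * Complex.I) * (‖w‖ * Complex.exp (w.arg * Complex.I)) := by
            rw [Complex.norm_mul_exp_arg_mul_I]
        _ = ‖w‖ := by
            rw [mul_left_comm, ← Complex.exp_add, Complex.ofReal_neg, neg_mul, neg_add_cancel,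
              Complex.exp_zero, mul_one]
    rw [eq_comm, ← Real.sqrt_sq (norm_nonneg (x - _)), norm_sub_exp_smul_sq, hrot,
      Complex.ofReal_re]
  · rintro r ⟨φ, rfl⟩
    have hre : (Complex.exp (φ * Complex.I) * w).re ≤ ‖w‖ := by
      simpa [Complex.norm_exp_ofReal_mul_I] using
        Complex.re_le_norm (Complex.exp (φ * Complex.I) * w)
    rw [← Real.sqrt_sq (norm_nonneg (x - _)), norm_sub_exp_smul_sq]
    gcongr

theorem pdist_nonneg : 0 ≤ pdist x y := by
  rw [pdist_eq_sqrt]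
  exact Real.sqrt_nonneg _

theorem sq_pdist : pdist x y ^ 2 = ‖x‖ ^ 2 + ‖y‖ ^ 2 - 2 * ‖⟪x, y⟫_ℂ‖ := by
  rw [pdist_eq_sqrt, Real.sq_sqrt ((sq_nonneg _).trans (sq_norm_sub_norm_le x y))]

theorem abs_norm_sub_norm_le_pdist : |‖x‖ - ‖y‖| ≤ pdist x y := by
  rw [← Real.sqrt_sq_eq_abs, pdist_eq_sqrt]
  exact Real.sqrt_le_sqrt (sq_norm_sub_norm_le x y)

theorem sq_frobNorm (A : Matrix (Fin N) (Fin N) ℂ) :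
    frobNorm A ^ 2 = ∑ i, ∑ j, Complex.normSq (A i j) :=
  Real.sq_sqrt (Finset.sum_nonneg fun _ _ ↦ Finset.sum_nonneg fun _ _ ↦ Complex.normSq_nonneg _)

theorem sq_frobNorm_outer_sub_outer :
    frobNorm (outer x x - outer y y) ^ 2 = ‖x‖ ^ 4 + ‖y‖ ^ 4 - 2 * ‖⟪x, y⟫_ℂ‖ ^ 2 := by
  have hinner (u v : EuclideanSpace ℂ (Fin N)) : ∑ i, conj (u i) * v i = ⟪u, v⟫_ℂ := by
    simp [PiLp.inner_apply, mul_comm]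
  have hentry (i j : Fin N) :
      (Complex.normSq ((outer x x - outer y y) i j) : ℂ) =
        conj (x i) * x i * (conj (x j) * x j) + conj (y i) * y i * (conj (y j) * y j)
          - conj (y i) * x i * (conj (x j) * y j) - conj (x i) * y i * (conj (y j) * x j) := by
    rw [Complex.normSq_eq_conj_mul_self]
    simp only [outer, Matrix.sub_apply, Matrix.of_apply, map_sub, map_mul, Complex.conj_conj]
    ring
  apply Complex.ofReal_injective
  rw [sq_frobNorm]
  push_cast
  simp_rw [hentry, Finset.sum_sub_distrib, Finset.sum_add_distrib, ← Finset.sum_mul_sum, hinner,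
    inner_self_eq_norm_sq_to_K]
  rw [← inner_conj_symm y x, Complex.conj_mul', Complex.mul_conj', RCLike.ofReal_eq_complex_ofReal]
  ring

theorem sq_frobNorm_outer_sub_outer_eq_sq_pdist :
    frobNorm (outer x x - outer y y) ^ 2 =
      (‖x‖ ^ 2 - ‖y‖ ^ 2) ^ 2 / 2 + pdist x y ^ 2 * (‖x‖ ^ 2 + ‖y‖ ^ 2 - pdist x y ^ 2 / 2) := by
  rw [sq_frobNorm_outer_sub_outer, sq_pdist]
  ring

end EuclideanSpace

theorem one_sub_mul_two_sub_mul_sq_le {b d ε : ℝ} (hbd : |b - 1| ≤ d) (hdε : d ≤ ε) (hε : ε < 1) :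
    (1 - ε) * (2 - ε) * d ^ 2 ≤ (b ^ 2 - 1) ^ 2 / 2 + d ^ 2 * (b ^ 2 + 1 - d ^ 2 / 2) := by
  have hd : 0 ≤ d := (abs_nonneg _).trans hbd
  have hb : (1 - ε) ^ 2 ≤ b ^ 2 :=
    pow_le_pow_left₀ (by linarith) (by linarith [(abs_le.1 hbd).1]) 2
  have hcoef : (1 - ε) * (2 - ε) ≤ b ^ 2 + 1 - d ^ 2 / 2 := by nlinarith
  nlinarith [sq_nonneg (b ^ 2 - 1), mul_le_mul_of_nonneg_right hcoef (sq_nonneg d)]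

/-- If `‖ρ_t‖ = 1` and `dist(ρ, ρ_t) ≤ ε < 1` then
`‖ρρᴴ - ρ_tρ_tᴴ‖_F ≥ √((1-ε)(2-ε))·dist(ρ, ρ_t)`. -/
theorem frobNorm_outer_sub_ge {N : ℕ} (ρ ρt : EuclideanSpace ℂ (Fin N)) (ε : ℝ)
    (hρt : ‖ρt‖ = 1) (hdist : pdist ρ ρt ≤ ε) (hε : ε < 1) :
    Real.sqrt ((1 - ε) * (2 - ε)) * pdist ρ ρt ≤
      frobNorm (outer ρ ρ - outer ρt ρt) := by
  have hnorm : |‖ρ‖ - 1| ≤ pdist ρ ρt := hρt ▸ abs_norm_sub_norm_le_pdist ρ ρt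
  have hsq := one_sub_mul_two_sub_mul_sq_le hnorm hdist hε
  calc √((1 - ε) * (2 - ε)) * pdist ρ ρt
      = √((1 - ε) * (2 - ε) * pdist ρ ρt ^ 2) := by
        rw [Real.sqrt_mul' _ (sq_nonneg _), Real.sqrt_sq (pdist_nonneg ρ ρt)]
    _ ≤ √(frobNorm (outer ρ ρ - outer ρt ρt) ^ 2) := by
        gcongr
        rwa [sq_frobNorm_outer_sub_outer_eq_sq_pdist, hρt, one_pow]
    _ = frobNorm (outer ρ ρ - outer ρt ρt) := Real.sqrt_sq (Real.sqrt_nonneg _)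
end

section
/- Let X be a Hermitian PSD N×N matrix, ρ_t a unit vector, and suppose ‖X - ρ_t ρ_t^H‖ ≤ δ in spectral norm with δ < 1. Let v₀ be a unit leading eigenvector of X and θ the angle with cos θ = |⟨ρ_t, v₀⟩|. Then sin²(θ) ≤ δ/(1-δ). -/
open ComplexConjugate
open scoped ComplexOrder

/-- The spectral (operator) norm of a matrix. -/
noncomputable def specNorm {N : ℕ} (A : Matrix (Fin N) (Fin N) ℂ) : ℝ :=
  ‖LinearMap.toContinuousLinearMap (Matrix.toEuclideanLin A)‖

/-!
Let `λ` be the top eigenvalue of `X` and `s = sin²θ = 1 - |⟨ρ_t, v₀⟩|²`. The vector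
`u = v₀ - ⟨ρ_t, v₀⟩ ρ_t` is orthogonal to `ρ_t`, with `‖u‖² = ⟨v₀, u⟩ = s`. Since `X` is within
`δ` of `ρ_t ρ_tᴴ`, `⟨u, X u⟩ ≤ δ s` and `⟨ρ_t, X ρ_t⟩ ≥ 1 - δ`, whence `λ ≥ 1 - δ` by the Rayleigh
bound. On the other hand `X - λ v₀ v₀ᴴ` is positive semidefinite, so
`⟨u, X u⟩ ≥ λ |⟨v₀, u⟩|² = λ s²`. Hence `(1 - δ) s² ≤ δ s`.
-/

section InnerProductSpace

variable {𝕜 E : Type*} [RCLike 𝕜] [NormedAddCommGroup E] [InnerProductSpace 𝕜 E]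

open RCLike in
theorem LinearMap.IsPositive.mul_norm_inner_sq_le_re_inner_apply {T : E →ₗ[𝕜] E}
    (hT : T.IsPositive) {v : E} (hv : ‖v‖ = 1) {μ : ℝ} (hTv : T v = (μ : 𝕜) • v) (x : E) :
    μ * ‖inner 𝕜 v x‖ ^ 2 ≤ re (inner 𝕜 (T x) x) := by
  set a := inner 𝕜 v x
  set z := x - a • v
  have hvv : inner 𝕜 v v = (1 : 𝕜) := by rw [inner_self_eq_norm_sq_to_K, hv]; simp
  have hvz : inner 𝕜 v z = 0 := by
    rw [inner_sub_right, inner_smul_right, hvv, mul_one, sub_self]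
  have hTzv : inner 𝕜 (T z) v = 0 := by
    rw [hT.isSymmetric, hTv, inner_smul_right, ← inner_conj_symm, hvz, map_zero, mul_zero]
  -- the cross terms vanish because `v⊥` is `T`-invariant
  have hsplit : inner 𝕜 (T x) x = (μ * ‖a‖ ^ 2 : ℝ) + inner 𝕜 (T z) z := by
    have hx : x = a • v + z := by simp [z]
    rw [hx, map_add, map_smul, hTv, smul_smul]
    simp only [inner_add_left, inner_add_right, inner_smul_left, inner_smul_right, hvv, hvz,
      hTzv, map_mul, conj_ofReal]
    push_cast
    rw [← RCLike.conj_mul]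
    ring
  rw [hsplit, map_add, ofReal_re]
  linarith [hT.re_inner_nonneg_left z]

theorem inner_sub_inner_smul_eq_zero {ρ : E} (hρ : ‖ρ‖ = 1) (v : E) :
    inner 𝕜 ρ (v - inner 𝕜 ρ v • ρ) = 0 := by
  rw [inner_sub_right, inner_smul_right, inner_self_eq_norm_sq_to_K, hρ]
  simp

theorem inner_sub_inner_smul_eq (ρ : E) {v : E} (hv : ‖v‖ = 1) :
    inner 𝕜 v (v - inner 𝕜 ρ v • ρ) = ((1 - ‖inner 𝕜 ρ v‖ ^ 2 : ℝ) : 𝕜) := by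
  rw [inner_sub_right, inner_smul_right, inner_self_eq_norm_sq_to_K, hv, ← inner_conj_symm v ρ,
    RCLike.mul_conj]
  push_cast
  ring

theorem norm_sub_inner_smul_sq {ρ v : E} (hρ : ‖ρ‖ = 1) (hv : ‖v‖ = 1) :
    ‖v - inner 𝕜 ρ v • ρ‖ ^ 2 = 1 - ‖inner 𝕜 ρ v‖ ^ 2 := by
  rw [← inner_self_eq_norm_sq (𝕜 := 𝕜), inner_sub_left, inner_smul_left,
    inner_sub_inner_smul_eq_zero hρ, mul_zero, sub_zero, inner_sub_inner_smul_eq ρ hv,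
    RCLike.ofReal_re]

end InnerProductSpace

open scoped MatrixOrder in
theorem Matrix.IsHermitian.re_inner_toEuclideanLin_le {𝕜 n : Type*} [RCLike 𝕜] [Fintype n]
    [DecidableEq n] {A : Matrix n n 𝕜} (hA : A.IsHermitian) (x : EuclideanSpace 𝕜 n) :
    RCLike.re (inner 𝕜 (toEuclideanLin A x) x) ≤ (⨆ i, hA.eigenvalues i) * ‖x‖ ^ 2 := by
  have hle : A ≤ algebraMap ℝ (Matrix n n 𝕜) (⨆ i, hA.eigenvalues i) := by
    refine le_algebraMap_of_spectrum_le (fun r hr => ?_) hA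
    obtain ⟨i, rfl⟩ := hA.spectrum_real_eq_range_eigenvalues ▸ hr
    exact le_ciSup (Set.finite_range _).bddAbove i
  have hpos := (Matrix.isPositive_toEuclideanLin_iff.mpr hle).re_inner_nonneg_left x
  have hsc : toEuclideanLin (algebraMap ℝ (Matrix n n 𝕜) (⨆ i, hA.eigenvalues i)) x
      = ((⨆ i, hA.eigenvalues i : ℝ) : 𝕜) • x := by
    ext i; simp [Algebra.algebraMap_eq_smul_one, Matrix.smul_mulVec]
  rwa [map_sub, LinearMap.sub_apply, hsc, inner_sub_left, map_sub, sub_nonneg, inner_smul_left,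
    RCLike.conj_ofReal, RCLike.re_ofReal_mul, inner_self_eq_norm_sq] at hpos

section SpecNorm

variable {N : ℕ}

theorem toEuclideanLin_outer_apply (x y z : EuclideanSpace ℂ (Fin N)) :
    Matrix.toEuclideanLin (outer x y) z = inner ℂ y z • x := by
  ext i
  simp [outer, Matrix.mulVec, dotProduct, PiLp.inner_apply, Finset.mul_sum, mul_comm,
    mul_left_comm]

theorem norm_toEuclideanLin_apply_le (A : Matrix (Fin N) (Fin N) ℂ)
    (x : EuclideanSpace ℂ (Fin N)) :
    ‖Matrix.toEuclideanLin A x‖ ≤ specNorm A * ‖x‖ :=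
  (LinearMap.toContinuousLinearMap (Matrix.toEuclideanLin A)).le_opNorm x

theorem abs_re_inner_toEuclideanLin_sub_norm_inner_sq_le (A : Matrix (Fin N) (Fin N) ℂ)
    (ρ x : EuclideanSpace ℂ (Fin N)) :
    |RCLike.re (inner ℂ (Matrix.toEuclideanLin A x) x) - ‖inner ℂ ρ x‖ ^ 2|
      ≤ specNorm (A - outer ρ ρ) * ‖x‖ ^ 2 := by
  have hsplit : RCLike.re (inner ℂ (Matrix.toEuclideanLin A x) x)
      = ‖inner ℂ ρ x‖ ^ 2 + RCLike.re (inner ℂ (Matrix.toEuclideanLin (A - outer ρ ρ) x) x) := by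
    rw [map_sub, LinearMap.sub_apply, inner_sub_left, toEuclideanLin_outer_apply,
      inner_smul_left, RCLike.conj_mul, map_sub, ← RCLike.ofReal_pow, RCLike.ofReal_re]
    ring
  calc |RCLike.re (inner ℂ (Matrix.toEuclideanLin A x) x) - ‖inner ℂ ρ x‖ ^ 2|
      ≤ ‖inner ℂ (Matrix.toEuclideanLin (A - outer ρ ρ) x) x‖ := by
        rw [hsplit, add_sub_cancel_left]; exact RCLike.abs_re_le_norm _
    _ ≤ ‖Matrix.toEuclideanLin (A - outer ρ ρ) x‖ * ‖x‖ := norm_inner_le_norm _ _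
    _ ≤ specNorm (A - outer ρ ρ) * ‖x‖ * ‖x‖ := by
        gcongr; exact norm_toEuclideanLin_apply_le _ x
    _ = specNorm (A - outer ρ ρ) * ‖x‖ ^ 2 := by ring

end SpecNorm

theorem le_div_one_sub_of_mul_sq_le_mul {δ μ s : ℝ} (hδ₀ : 0 ≤ δ) (hδ : δ < 1) (hμ : 1 - δ ≤ μ)
    (hs : 0 ≤ s) (h : μ * s ^ 2 ≤ δ * s) : s ≤ δ / (1 - δ) := by
  rw [le_div_iff₀ (sub_pos.mpr hδ)]
  rcases hs.eq_or_lt with rfl | hs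
  · simpa using hδ₀
  · have hμs : μ * s ≤ δ := le_of_mul_le_mul_right (by nlinarith) hs
    nlinarith

/-- If `X` is Hermitian PSD, `ρ_t` is a unit vector with `‖X - ρ_tρ_tᴴ‖ ≤ δ < 1`
in spectral norm, `v₀` is a unit leading eigenvector of `X` and `θ` the angle
with `cos θ = |⟨ρ_t, v₀⟩|`, then `sin²θ ≤ δ/(1-δ)`. -/
theorem sin_sq_angle_bound {N : ℕ} (X : Matrix (Fin N) (Fin N) ℂ)
    (hX : X.PosSemidef) (ρt v₀ : EuclideanSpace ℂ (Fin N))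
    (hρt : ‖ρt‖ = 1) (hv₀ : ‖v₀‖ = 1) (δ θ : ℝ) (hδ : δ < 1)
    (hnear : specNorm (X - outer ρt ρt) ≤ δ)
    (hlead : Matrix.toEuclideanLin X v₀ = ((⨆ i, hX.1.eigenvalues i : ℝ) : ℂ) • v₀)
    (hcos : Real.cos θ = ‖(inner ℂ ρt v₀ : ℂ)‖) :
    Real.sin θ ^ 2 ≤ δ / (1 - δ) := by
  set s := 1 - ‖inner ℂ ρt v₀‖ ^ 2
  set u := v₀ - inner ℂ ρt v₀ • ρt
  have hclose (x : EuclideanSpace ℂ (Fin N)) :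
      |RCLike.re (inner ℂ (Matrix.toEuclideanLin X x) x) - ‖inner ℂ ρt x‖ ^ 2| ≤ δ * ‖x‖ ^ 2 :=
    (abs_re_inner_toEuclideanLin_sub_norm_inner_sq_le X ρt x).trans
      (mul_le_mul_of_nonneg_right hnear (sq_nonneg ‖x‖))
  have hu : ‖u‖ ^ 2 = s := norm_sub_inner_smul_sq hρt hv₀
  have hs : 0 ≤ s := hu ▸ sq_nonneg ‖u‖
  have hlead_ge : 1 - δ ≤ ⨆ i, hX.1.eigenvalues i := by
    have hρρ : ‖inner ℂ ρt ρt‖ = 1 := by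
      rw [← inner_self_re_eq_norm, inner_self_eq_norm_sq, hρt, one_pow]
    have hnear_ρ := (abs_le.mp (hclose ρt)).1
    have hrayleigh := hX.1.re_inner_toEuclideanLin_le ρt
    simp only [hρρ, hρt, one_pow, mul_one] at hnear_ρ hrayleigh
    linarith
  have hupper : RCLike.re (inner ℂ (Matrix.toEuclideanLin X u) u) ≤ δ * s := by
    have hnear_u := (abs_le.mp (hclose u)).2
    rw [inner_sub_inner_smul_eq_zero hρt, norm_zero, hu] at hnear_u
    linarith
  have hlower :
      (⨆ i, hX.1.eigenvalues i) * s ^ 2 ≤ RCLike.re (inner ℂ (Matrix.toEuclideanLin X u) u) := by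
    have h := (Matrix.isPositive_toEuclideanLin_iff.mpr hX).mul_norm_inner_sq_le_re_inner_apply
      hv₀ hlead u
    rwa [inner_sub_inner_smul_eq ρt hv₀, RCLike.norm_ofReal, abs_of_nonneg hs] at h
  rw [Real.sin_sq, hcos]
  exact le_div_one_sub_of_mul_sq_le_mul ((norm_nonneg _).trans hnear) hδ hlead_ge hs
    (hlower.trans hupper)
end
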